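/- arXiv:2012.13655 — 3 statements merged into one kernel-verified Lean document; each statement's English description precedes it below -/
import Mathlib

section
/- Let H ≤ F(a,b) be a subgroup of finite index p ≥ 1, and let k, l be the smallest positive integers such that a^k ∈ H and b^l ∈ H. Then there exists a free basis Y of H containing both a^k and b^l. -/
noncomputable section

abbrev F2 := FreeGroup (Fin 2)

def a : F2 := FreeGroup.of 0
def b : F2 := FreeGroup.of 1

/-- An element of a group is primitive if it belongs to some free basis of the group. -/
def Primitive {G : Type*} [Group G] (g : G) : Prop :=
  ∃ (ι : Type) (bas : FreeGroupBasis ι G) (i : ι), bas i = g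

/-- An element of a group is simple if it lies in a proper free factor, i.e. there is a
free product decomposition `G = A ∗ B` with `A`, `B` nontrivial and `g ∈ A`. -/
def SimpleElem {G : Type*} [Group G] (g : G) : Prop :=
  ∃ A B : Subgroup G, A ≠ ⊥ ∧ B ≠ ⊥ ∧ g ∈ A ∧
    Function.Bijective (Monoid.Coprod.lift A.subtype B.subtype)

/-- The primitivity index: the smallest (finite) index of a subgroup `H ≤ F₂` containing `g`
in which `g` is primitive. -/
def dPrim (g : F2) : ℕ :=
  sInf {n : ℕ | 0 < n ∧ ∃ H : Subgroup F2, H.index = n ∧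
    ∃ hg : g ∈ H, Primitive (⟨g, hg⟩ : H)}

/-- The simplicity index: the smallest (finite) index of a subgroup `H ≤ F₂` containing `g`
in which `g` is simple. -/
def dSimp (g : F2) : ℕ :=
  sInf {n : ℕ | 0 < n ∧ ∃ H : Subgroup F2, H.index = n ∧
    ∃ hg : g ∈ H, SimpleElem (⟨g, hg⟩ : H)}

/-- `smallestNonDivisor n` is the smallest integer `d ≥ 2` with `d ∤ n`. -/
def smallestNonDivisor (n : ℕ) : ℕ := sInf {d : ℕ | 2 ≤ d ∧ ¬ d ∣ n}

/-! Fix a Schreier transversal `t` of `H` in `F(X)`, built from geodesic words, so that for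
every coset `c ≠ H` the word `t c` is a letter followed by `t` of a coset nearer to `H`. The
Reidemeister–Schreier rewriting process then identifies `H` with the free group on the edges
`(x, c)` of the coset graph that are not tree edges. Reading `x ^ n` from the trivial coset
crosses only `x`-edges, at the cosets `x, x², …, xⁿ`, which are pairwise distinct by minimality
of `n`. So its rewrite has the form `e * Q`, where `e` is the last non-tree edge crossed and `Q`
is a word in other `x`-edges. The transvection `e ↦ e * Q` is an automorphism of the free group,
and performing these for all generators at once (their edges carry different labels) yields a
basis containing every `xⁿ`. -/

universe u

open FreeGroup

section Transvection

variable {ι : Type*}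

lemma FreeGroup.exists_mulEquiv_of_mem_closure_compl (T : Set ι) (v : ι → FreeGroup ι)
    (hv : ∀ j ∈ T, v j ∈ Subgroup.closure (of '' Tᶜ)) :
    ∃ σ : FreeGroup ι ≃* FreeGroup ι, ∀ j ∈ T, σ (of j) = of j * v j := by
  classical
  let τ (w : ι → FreeGroup ι) : FreeGroup ι →* FreeGroup ι :=
    FreeGroup.lift fun j => if j ∈ T then of j * w j else of j
  have τ_of_mem (w) {j} (hj : j ∈ T) : τ w (of j) = of j * w j := by simp [τ, hj]
  have τ_of_notMem (w) {j} (hj : j ∉ T) : τ w (of j) = of j := by simp [τ, hj]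
  have τ_eqOn (w) : Set.EqOn (τ w) (MonoidHom.id _) (Subgroup.closure (of '' Tᶜ)) :=
    MonoidHom.eqOn_closure <| by rintro _ ⟨j, hj, rfl⟩; exact τ_of_notMem w hj
  have τ_comp (w w' : ι → FreeGroup ι) (hw : ∀ j ∈ T, w j ∈ Subgroup.closure (of '' Tᶜ))
      (hww' : ∀ j ∈ T, w' j = (w j)⁻¹) : (τ w').comp (τ w) = MonoidHom.id _ := by
    ext j
    by_cases hj : j ∈ T
    · simp [τ_of_mem _ hj, τ_eqOn w' (hw j hj), hww' j hj]
    · simp [τ_of_notMem _ hj]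
  refine ⟨MonoidHom.toMulEquiv (τ v) (τ v⁻¹) (τ_comp v v⁻¹ hv fun _ _ => rfl)
    (τ_comp v⁻¹ v (fun j hj => inv_mem (hv j hj)) fun _ _ => (inv_inv _).symm),
    fun j hj => τ_of_mem v hj⟩

lemma FreeGroupBasis.exists_apply_eq_mul_of_mem_closure_compl {G : Type*} [Group G]
    (bas : FreeGroupBasis ι G) (T : Set ι) (u : ι → G)
    (hu : ∀ j ∈ T, u j ∈ Subgroup.closure (bas '' Tᶜ)) :
    ∃ bas' : FreeGroupBasis ι G, ∀ j ∈ T, bas' j = bas j * u j := by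
  obtain ⟨σ, hσ⟩ := FreeGroup.exists_mulEquiv_of_mem_closure_compl T (fun j => bas.repr (u j))
    fun j hj => by
      simpa [MonoidHom.map_closure, Set.image_image] using
        Subgroup.mem_map_of_mem bas.repr.toMonoidHom (hu j hj)
  refine ⟨.ofRepr (bas.repr.trans σ.symm), fun j hj => ?_⟩
  change bas.repr.symm (σ (of j)) = bas.repr.symm (of j) * u j
  simp [hσ j hj]

end Transvection

lemma QuotientGroup.mk_pow_ne_mk_pow {G : Type*} [Group G] {H : Subgroup G} {g : G} {n : ℕ}
    (hmin : ∀ m, 0 < m → g ^ m ∈ H → n ≤ m) {m m' : ℕ} (hmm' : m < m') (hm'n : m' < m + n) :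
    (↑(g ^ m) : G ⧸ H) ≠ ↑(g ^ m') := by
  obtain ⟨d, rfl⟩ : ∃ d, m' = m + (d + 1) := ⟨m' - m - 1, by omega⟩
  rw [Ne, QuotientGroup.eq, pow_add, inv_mul_cancel_left]
  intro hd
  have := hmin (d + 1) d.succ_pos hd
  omega

namespace Schreier

variable {X : Type*} (H : Subgroup (FreeGroup X))

abbrev root : FreeGroup X ⧸ H := ((1 : FreeGroup X) : FreeGroup X ⧸ H)

variable {H} in
lemma smul_root (g : FreeGroup X) : g • root H = g := by
  rw [MulAction.Quotient.smul_mk, smul_eq_mul, mul_one]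

variable {H} in
lemma mk_eq_root_iff {g : FreeGroup X} : (g : FreeGroup X ⧸ H) = root H ↔ g ∈ H := by
  rw [QuotientGroup.eq, mul_one, inv_mem_iff]

variable {H} in
lemma inv_smul_root_of_mem {h : FreeGroup X} (hh : h ∈ H) : h⁻¹ • root H = root H := by
  rw [smul_root, mk_eq_root_iff]
  exact inv_mem hh

def wordDist (c : FreeGroup X ⧸ H) : ℕ :=
  sInf {n | ∃ L : List (X × Bool), (mk L : FreeGroup X ⧸ H) = c ∧ L.length = n}

variable {H} in
lemma exists_letter_wordDist_lt {c : FreeGroup X ⧸ H} (hc : c ≠ root H) :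
    ∃ s : X × Bool, wordDist H ((mk [s])⁻¹ • c) < wordDist H c := by
  obtain ⟨L, hLc, hL⟩ : wordDist H c ∈ {n | ∃ L : List (X × Bool),
      (mk L : FreeGroup X ⧸ H) = c ∧ L.length = n} := by
    refine Nat.sInf_mem ?_
    obtain ⟨g, rfl⟩ := QuotientGroup.mk_surjective c
    obtain ⟨L, rfl⟩ := Quot.exists_rep g
    exact ⟨_, L, rfl, rfl⟩
  obtain _ | ⟨s, L'⟩ := L
  · exact absurd hLc.symm hc
  refine ⟨s, lt_of_le_of_lt (Nat.sInf_le ⟨L', ?_, rfl⟩) (by simp [← hL])⟩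
  rw [← hLc, MulAction.Quotient.smul_mk, smul_eq_mul, show s :: L' = [s] ++ L' from rfl,
    ← mul_mk, inv_mul_cancel_left]

open Classical in
def transversal (c : FreeGroup X ⧸ H) : FreeGroup X :=
  if hc : c = root H then 1 else
    mk [(exists_letter_wordDist_lt hc).choose] *
      transversal ((mk [(exists_letter_wordDist_lt hc).choose])⁻¹ • c)
termination_by wordDist H c
decreasing_by exact (exists_letter_wordDist_lt hc).choose_spec

lemma transversal_root : transversal H (root H) = 1 := by
  rw [transversal, dif_pos rfl]

variable {H} in
lemma exists_transversal_eq {c : FreeGroup X ⧸ H} (hc : c ≠ root H) :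
    ∃ s : X × Bool, wordDist H ((mk [s])⁻¹ • c) < wordDist H c ∧
      transversal H c = mk [s] * transversal H ((mk [s])⁻¹ • c) := by
  refine ⟨_, (exists_letter_wordDist_lt hc).choose_spec, ?_⟩
  rw [transversal, dif_neg hc]

variable {H} in
lemma transversal_induction {P : FreeGroup X ⧸ H → Prop} (hroot : P (root H))
    (hstep : ∀ c ≠ root H, ∀ s : X × Bool,
      transversal H c = mk [s] * transversal H ((mk [s])⁻¹ • c) → P ((mk [s])⁻¹ • c) → P c)
    (c : FreeGroup X ⧸ H) : P c := by
  induction hn : wordDist H c using Nat.strong_induction_on generalizing c with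
  | _ n ih =>
    by_cases hc : c = root H
    · exact hc ▸ hroot
    obtain ⟨s, hlt, heq⟩ := exists_transversal_eq hc
    exact hstep c hc s heq (ih _ (hn ▸ hlt) _ rfl)

lemma mk_transversal (c : FreeGroup X ⧸ H) : (transversal H c : FreeGroup X ⧸ H) = c := by
  induction c using transversal_induction with
  | hroot => rw [transversal_root]
  | hstep c _ s heq ih =>
    rw [heq, ← smul_eq_mul, ← MulAction.Quotient.smul_mk, ih, smul_inv_smul]

/-- The edge labelled `x` from `x⁻¹ • c` to `c` lies in the Schreier tree. Every edge of the
coset graph is of this form for exactly one pair `(x, c)`. -/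
def IsTreeEdge (x : X) (c : FreeGroup X ⧸ H) : Prop :=
  transversal H c = of x * transversal H ((of x)⁻¹ • c)

abbrev Edge : Type _ := {e : X × (FreeGroup X ⧸ H) // ¬ IsTreeEdge H e.1 e.2}

/- The semidirect product with `F(X)` acting on functions of cosets makes the rewriting
process a homomorphism. Its first component satisfies the cocycle identity `cocycle_mul`. -/
open Classical in
def cocycleHom :
    FreeGroup X →* (FreeGroup X ⧸ H → FreeGroup (Edge H)) ⋊[mulAutArrow] FreeGroup X :=
  FreeGroup.lift fun x => ⟨fun c => if h : IsTreeEdge H x c then 1 else of ⟨(x, c), h⟩, of x⟩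

def cocycle (g : FreeGroup X) (c : FreeGroup X ⧸ H) : FreeGroup (Edge H) :=
  (cocycleHom H g).left c

lemma right_cocycleHom (g : FreeGroup X) : (cocycleHom H g).right = g := by
  have : SemidirectProduct.rightHom.comp (cocycleHom H) = MonoidHom.id _ :=
    FreeGroup.ext_hom _ _ fun x => by simp [cocycleHom]
  exact DFunLike.congr_fun this g

lemma cocycle_one (c : FreeGroup X ⧸ H) : cocycle H 1 c = 1 := by
  rw [cocycle, MonoidHom.map_one]
  rfl

lemma cocycle_mul (g g' : FreeGroup X) (c : FreeGroup X ⧸ H) :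
    cocycle H (g * g') c = cocycle H g c * cocycle H g' (g⁻¹ • c) := by
  rw [cocycle, MonoidHom.map_mul, SemidirectProduct.mul_left, right_cocycleHom]
  rfl

lemma cocycle_inv (g : FreeGroup X) (c : FreeGroup X ⧸ H) :
    cocycle H g⁻¹ c = (cocycle H g (g • c))⁻¹ := by
  have h := cocycle_mul H g g⁻¹ (g • c)
  rw [mul_inv_cancel, cocycle_one, inv_smul_smul] at h
  exact eq_inv_of_mul_eq_one_right h.symm

variable {H} in
lemma cocycle_of_of_isTreeEdge {x : X} {c : FreeGroup X ⧸ H} (h : IsTreeEdge H x c) :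
    cocycle H (of x) c = 1 := by
  simp [cocycle, cocycleHom, h]

variable {H} in
lemma cocycle_of_of_not_isTreeEdge {x : X} {c : FreeGroup X ⧸ H} (h : ¬ IsTreeEdge H x c) :
    cocycle H (of x) c = of (⟨(x, c), h⟩ : Edge H) := by
  simp [cocycle, cocycleHom, h]

lemma cocycle_transversal (c : FreeGroup X ⧸ H) : cocycle H (transversal H c) c = 1 := by
  induction c using transversal_induction with
  | hroot => rw [transversal_root, cocycle_one]
  | hstep c _ s heq ih =>
    obtain ⟨x, _ | _⟩ := s
    · have hs : mk [(x, false)] = (of x)⁻¹ := rfl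
      rw [hs, inv_inv] at heq ih
      have htree : IsTreeEdge H x (of x • c) := by
        rw [IsTreeEdge, inv_smul_smul, heq, mul_inv_cancel_left]
      rw [heq, cocycle_mul, inv_inv, ih, mul_one, cocycle_inv, cocycle_of_of_isTreeEdge htree,
        inv_one]
    · have hs : mk [(x, true)] = of x := rfl
      rw [hs] at heq ih
      rw [heq, cocycle_mul, ih, mul_one, cocycle_of_of_isTreeEdge heq]

def edgeValue (e : Edge H) : FreeGroup X :=
  (transversal H e.1.2)⁻¹ * of e.1.1 * transversal H ((of e.1.1)⁻¹ • e.1.2)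

lemma edgeValue_mem (e : Edge H) : edgeValue H e ∈ H := by
  rw [← mk_eq_root_iff, edgeValue, mul_assoc, ← smul_eq_mul, ← MulAction.Quotient.smul_mk,
    ← smul_eq_mul, ← MulAction.Quotient.smul_mk, mk_transversal, smul_inv_smul, inv_smul_eq_iff,
    smul_root, mk_transversal]

lemma lift_edgeValue_cocycle (g : FreeGroup X) (c : FreeGroup X ⧸ H) :
    FreeGroup.lift (edgeValue H) (cocycle H g c) =
      (transversal H c)⁻¹ * g * transversal H (g⁻¹ • c) := by
  induction g using FreeGroup.induction_on generalizing c with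
  | C1 => rw [cocycle_one, MonoidHom.map_one, inv_one, one_smul, mul_one, inv_mul_cancel]
  | of x =>
    by_cases h : IsTreeEdge H x c
    · rw [cocycle_of_of_isTreeEdge h, MonoidHom.map_one, h]
      group
    · rw [cocycle_of_of_not_isTreeEdge h, lift_apply_of]
      rfl
  | inv_of x ih =>
    rw [cocycle_inv, MonoidHom.map_inv, ih, inv_smul_smul, inv_inv]
    group
  | mul g g' ihg ihg' =>
    rw [cocycle_mul, MonoidHom.map_mul, ihg, ihg', mul_inv_rev, mul_smul]
    group

lemma cocycle_edgeValue (e : Edge H) : cocycle H (edgeValue H e) (root H) = of e := by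
  rw [edgeValue, mul_assoc, cocycle_mul, cocycle_inv, smul_root, mk_transversal,
    cocycle_transversal, inv_one, one_mul, inv_inv, smul_root, mk_transversal, cocycle_mul,
    cocycle_transversal, mul_one, cocycle_of_of_not_isTreeEdge e.2]

def toSubgroup : FreeGroup (Edge H) →* H :=
  (FreeGroup.lift (edgeValue H)).codRestrict H fun z =>
    FreeGroup.range_lift_le (Set.range_subset_iff.2 (edgeValue_mem H)) ⟨z, rfl⟩

def ofSubgroup : H →* FreeGroup (Edge H) where
  toFun h := cocycle H h (root H)
  map_one' := cocycle_one H _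
  map_mul' h h' := by
    rw [Subgroup.coe_mul, cocycle_mul, inv_smul_root_of_mem h.2]

def equiv : FreeGroup (Edge H) ≃* H :=
  MonoidHom.toMulEquiv (toSubgroup H) (ofSubgroup H)
    (FreeGroup.ext_hom _ _ fun e => by
      change cocycle H (FreeGroup.lift (edgeValue H) (of e)) (root H) = of e
      rw [lift_apply_of, cocycle_edgeValue])
    (by
      ext h
      change FreeGroup.lift (edgeValue H) (cocycle H h (root H)) = h
      rw [lift_edgeValue_cocycle, inv_smul_root_of_mem h.2, transversal_root, inv_one, one_mul,
        mul_one])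

lemma equiv_cocycle (h : H) : equiv H (cocycle H h (root H)) = h :=
  (equiv H).apply_symm_apply h

def basis : FreeGroupBasis (Edge H) H := .ofRepr (equiv H).symm

lemma basis_apply (e : Edge H) : basis H e = equiv H (of e) := rfl

lemma cocycle_pow_succ (g : FreeGroup X) (j : ℕ) :
    cocycle H (g ^ (j + 1)) ↑(g ^ (j + 1)) =
      cocycle H g ↑(g ^ (j + 1)) * cocycle H (g ^ j) ↑(g ^ j) := by
  rw [pow_succ', cocycle_mul, MulAction.Quotient.smul_mk, smul_eq_mul, inv_mul_cancel_left]

lemma cocycle_of_pow_mem_closure (x : X) (j : ℕ) :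
    cocycle H (of x ^ j) ↑(of x ^ j) ∈ Subgroup.closure
      (of '' {e : Edge H | e.1.1 = x ∧ ∃ m, 0 < m ∧ m ≤ j ∧ e.1.2 = ↑(of x ^ m)}) := by
  induction j with
  | zero =>
    rw [pow_zero, cocycle_one]
    exact one_mem _
  | succ j ih =>
    rw [cocycle_pow_succ]
    refine mul_mem ?_ (Subgroup.closure_mono (Set.image_mono ?_) ih)
    · by_cases h : IsTreeEdge H x ↑(of x ^ (j + 1))
      · rw [cocycle_of_of_isTreeEdge h]
        exact one_mem _
      · rw [cocycle_of_of_not_isTreeEdge h]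
        exact Subgroup.subset_closure ⟨_, ⟨rfl, j + 1, j.succ_pos, le_rfl, rfl⟩, rfl⟩
    · rintro e ⟨hx, m, hm, hmj, hc⟩
      exact ⟨hx, m, hm, hmj.trans j.le_succ, hc⟩

lemma exists_cocycle_of_pow_eq (x : X) {n : ℕ} (hxn : of x ^ n ∈ H) (hn : 0 < n)
    (hmin : ∀ m, 0 < m → of x ^ m ∈ H → n ≤ m) :
    ∃ e : Edge H, e.1.1 = x ∧
      ∃ Q ∈ Subgroup.closure (of '' {e' : Edge H | e'.1.1 = x ∧ e' ≠ e}),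
        cocycle H (of x ^ n) (root H) = of e * Q := by
  classical
  obtain ⟨S, hS⟩ : ∃ S : ℕ → FreeGroup (Edge H), ∀ j, S j = cocycle H (of x ^ j) ↑(of x ^ j) :=
    ⟨_, fun _ => rfl⟩
  have hSn : S n = cocycle H (of x ^ n) (root H) := by rw [hS, mk_eq_root_iff.2 hxn]
  have hSn_ne : S n ≠ S 0 := by
    rw [hSn, hS, pow_zero, cocycle_one, Ne, ← (equiv H).map_eq_one_iff, equiv_cocycle H ⟨_, hxn⟩,
      Subgroup.mk_eq_one, pow_eq_one_iff_right (of_ne_one x)]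
    exact hn.ne'
  -- `M + 1` is the first step after which the partial products stay equal to `S n`, so the
  -- letter read there crosses a non-tree edge.
  have hex : ∃ j, S j = S n := ⟨n, rfl⟩
  obtain ⟨M, hM⟩ : ∃ M, Nat.find hex = M + 1 :=
    Nat.exists_eq_succ_of_ne_zero fun h => hSn_ne (h ▸ Nat.find_spec hex).symm
  have hSM : S (M + 1) = S n := hM ▸ Nat.find_spec hex
  have hSM_ne : S M ≠ S n := Nat.find_min hex (by omega)
  have hMn : M + 1 ≤ n := hM ▸ Nat.find_min' hex rfl
  have hsucc : S (M + 1) = cocycle H (of x) ↑(of x ^ (M + 1)) * S M := by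
    rw [hS, hS, cocycle_pow_succ]
  have htree : ¬ IsTreeEdge H x ↑(of x ^ (M + 1)) := fun h => by
    rw [cocycle_of_of_isTreeEdge h, one_mul, hSM] at hsucc
    exact hSM_ne hsucc.symm
  refine ⟨⟨(x, _), htree⟩, rfl, S M,
    Subgroup.closure_mono (Set.image_mono ?_) (hS M ▸ cocycle_of_pow_mem_closure H x M), ?_⟩
  · rintro e ⟨hx, m, hm, hmM, hc⟩
    refine ⟨hx, fun he => ?_⟩
    subst he
    exact QuotientGroup.mk_pow_ne_mk_pow hmin (by omega) (by omega) hc.symm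
  · rw [← hSn, ← hSM, hsucc, cocycle_of_of_not_isTreeEdge htree]
    rfl

lemma exists_basis_mul_eq_of_pow_mem (x : X) {n : ℕ} (hxn : of x ^ n ∈ H) (hn : 0 < n)
    (hmin : ∀ m, 0 < m → of x ^ m ∈ H → n ≤ m) :
    ∃ e : Edge H, e.1.1 = x ∧
      ∃ Q ∈ Subgroup.closure (basis H '' {e' | e'.1.1 = x ∧ e' ≠ e}),
        basis H e * Q = ⟨of x ^ n, hxn⟩ := by
  obtain ⟨e, hx, Q, hQ, heq⟩ := exists_cocycle_of_pow_eq H x hxn hn hmin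
  refine ⟨e, hx, equiv H Q, ?_, ?_⟩
  · have := Subgroup.mem_map_of_mem (equiv H).toMonoidHom hQ
    rwa [MonoidHom.map_closure, ← Set.image_comp] at this
  · rw [basis_apply, ← _root_.map_mul, ← heq]
    exact equiv_cocycle H ⟨_, hxn⟩

end Schreier

theorem FreeGroup.exists_freeGroupBasis_of_pow_mem {X : Type u} (H : Subgroup (FreeGroup X))
    (S : Set X) (n : X → ℕ) (hmem : ∀ x ∈ S, of x ^ n x ∈ H) (hn : ∀ x ∈ S, 0 < n x)
    (hmin : ∀ x ∈ S, ∀ m, 0 < m → of x ^ m ∈ H → n x ≤ m) :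
    ∃ (ι : Type u) (bas : FreeGroupBasis ι H) (f : S → ι),
      ∀ x : S, (bas (f x) : FreeGroup X) = of (x : X) ^ n x := by
  choose e he Q hQ heq using fun x : S =>
    Schreier.exists_basis_mul_eq_of_pow_mem H x (hmem x x.2) (hn x x.2) (hmin x x.2)
  have he_inj : Function.Injective e := fun x y hxy => Subtype.ext (by rw [← he x, ← he y, hxy])
  obtain ⟨bas, hbas⟩ := (Schreier.basis H).exists_apply_eq_mul_of_mem_closure_compl (Set.range e)
    (Function.extend e Q 1) <| by
      rintro _ ⟨x, rfl⟩
      rw [he_inj.extend_apply]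
      refine Subgroup.closure_mono (Set.image_mono ?_) (hQ x)
      rintro _ ⟨hx, hne⟩ ⟨y, rfl⟩
      exact hne (congrArg e (Subtype.ext ((he y).symm.trans hx)))
  refine ⟨_, bas, e, fun x => ?_⟩
  rw [hbas _ ⟨x, rfl⟩, he_inj.extend_apply, heq]

theorem basis_containing_powers_general (H : Subgroup F2)
    (k l : ℕ) (hk0 : 0 < k) (hl0 : 0 < l)
    (hak : a ^ k ∈ H) (hbl : b ^ l ∈ H)
    (hkmin : ∀ k' : ℕ, 0 < k' → a ^ k' ∈ H → k ≤ k')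
    (hlmin : ∀ l' : ℕ, 0 < l' → b ^ l' ∈ H → l ≤ l') :
    ∃ (ι : Type) (bas : FreeGroupBasis ι ↥H) (i j : ι),
      (bas i : F2) = a ^ k ∧ (bas j : F2) = b ^ l := by
  obtain ⟨ι, bas, f, hf⟩ := FreeGroup.exists_freeGroupBasis_of_pow_mem H Set.univ ![k, l]
    (by simpa [Fin.forall_fin_two] using ⟨hak, hbl⟩)
    (by simpa [Fin.forall_fin_two] using ⟨hk0, hl0⟩)
    (by simpa [Fin.forall_fin_two] using ⟨hkmin, hlmin⟩)
  exact ⟨ι, bas, f ⟨0, trivial⟩, f ⟨1, trivial⟩, hf _, hf _⟩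

theorem basis_containing_powers (H : Subgroup F2) (p : ℕ) (hp : 1 ≤ p) (hip : H.index = p)
    (k l : ℕ) (hk0 : 0 < k) (hl0 : 0 < l)
    (hak : a ^ k ∈ H) (hbl : b ^ l ∈ H)
    (hkmin : ∀ k' : ℕ, 0 < k' → a ^ k' ∈ H → k ≤ k')
    (hlmin : ∀ l' : ℕ, 0 < l' → b ^ l' ∈ H → l ≤ l') :
    ∃ (ι : Type) (bas : FreeGroupBasis ι ↥H) (i j : ι),
      (bas i : F2) = a ^ k ∧ (bas j : F2) = b ^ l :=
  basis_containing_powers_general H k l hk0 hl0 hak hbl hkmin hlmin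
end
end

section
/- Let i ≥ 3, n_i = lcm(1, 2, …, i), and let H ≤ F(a,b) be a subgroup of finite index m with m < d(n_i), where d(n_i) is the smallest integer ≥ 2 not dividing n_i. If a^{n_i} b^{n_i} ∈ H, then a^{n_i} b^{n_i} is not primitive in H. -/
noncomputable section

/-!
If `w = a ^ n * b ^ n` were primitive in `H`, then for every finite group `G` the number of
homomorphisms `H →* G` sending `w` to `g` would not depend on `g`. Homomorphisms `H →* G`
correspond, up to a free choice of gauge on the cosets, to lifts of the action of `F₂` on `F₂ ⧸ H`
to the wreath product `(F₂ ⧸ H → G) ⋊ F₂`, and over the free group these lifts are freely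
determined by the images of `a` and `b`. If `k` and `l` are the lengths of the `a`- and `b`-orbits
of the trivial coset, then `w = (a ^ k) ^ p * (b ^ l) ^ q` with `p = n / k`, `q = n / l`, and the
value of a lift at `w` only sees the orbit products of `a` and `b`; counting lifts shows that all
fibres of `(u, v) ↦ u ^ p * v ^ q` on `G × G` have the same size.

Since `k, l ≤ [F₂ : H] < d(n)`, both divide `n`. If `p` and `q` have a common factor `π`, the
group `ℤ/π` breaks the uniformity. Otherwise `n ∣ k * l < d(n) ^ 2`, which the growth of
`lcm(1, …, i)` rules out except for `i = 3, 4`, where `(p, q)` is one of `(2, 3)`, `(3, 2)`,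
`(3, 4)`, `(4, 3)` and `S₃` breaks the uniformity.
-/

open Function

namespace PrimitivePower

section OrbitProd

variable {M α G : Type*} [Monoid M] [MulAction M α] [Monoid G]

def orbitProd (y : M) (f : α → G) : ℕ → α → G
  | 0, _ => 1
  | j + 1, s => f s * orbitProd y f j (y • s)

lemma orbitProd_update_of_ne [DecidableEq α] (y : M) (f : α → G) {s₀ : α} (g : G) :
    ∀ (j : ℕ) (s : α), (∀ r < j, y ^ r • s ≠ s₀) →
      orbitProd y (update f s₀ g) j s = orbitProd y f j s
  | 0, _, _ => rfl
  | j + 1, s, h => by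
    have hs : s ≠ s₀ := by simpa using h 0 j.succ_pos
    have htail : ∀ r < j, y ^ r • y • s ≠ s₀ := fun r hr => by
      simpa [← mul_smul, ← pow_succ] using h (r + 1) (by omega)
    simp only [orbitProd, update_of_ne hs, orbitProd_update_of_ne y f g j _ htail]

end OrbitProd

section SplitAt

variable {α G : Type*} [DecidableEq α] [Group G]

def mulRightAtEquiv (s₀ : α) (τ : (α → G) → G) (hτ : ∀ f g, τ (update f s₀ g) = τ f) :
    (α → G) ≃ (α → G) where
  toFun f := update f s₀ (f s₀ * τ f)
  invFun f := update f s₀ (f s₀ * (τ f)⁻¹)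
  left_inv f := by simp [hτ]
  right_inv f := by simp [hτ]

/-- When `s₀` has period `K + 1` under `y`, a function `f` is determined by its values off `s₀`
together with the product of `f` along the orbit of `s₀`. -/
def orbitProdSplit {M : Type*} [Monoid M] [MulAction M α] (y : M) (s₀ : α) (K : ℕ)
    (hK : ∀ r, 0 < r → r < K + 1 → y ^ r • s₀ ≠ s₀) :
    (α → G) ≃ G × ({s // s ≠ s₀} → G) :=
  (mulRightAtEquiv s₀ (fun f => orbitProd y f K (y • s₀)) fun f g =>
      orbitProd_update_of_ne y f g K _ fun r hr => by
        simpa [← mul_smul, ← pow_succ] using hK (r + 1) r.succ_pos (by omega)).trans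
    (Equiv.funSplitAt s₀ G)

lemma orbitProdSplit_fst {M : Type*} [Monoid M] [MulAction M α] (y : M) (s₀ : α) (K : ℕ)
    (hK : ∀ r, 0 < r → r < K + 1 → y ^ r • s₀ ≠ s₀) (f : α → G) :
    (orbitProdSplit y s₀ K hK f).1 = orbitProd y f (K + 1) s₀ := by
  simp [orbitProdSplit, mulRightAtEquiv, orbitProd]

end SplitAt

section WreathLift

variable {Γ : Type*} [Group Γ] (H : Subgroup Γ) (G : Type*) [Group G]

abbrev Wreath := (Γ ⧸ H → G) ⋊[mulAutArrow] Γ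

@[ext]
structure WreathLift where
  toHom : Γ →* Wreath H G
  right_apply (x : Γ) : (toHom x).right = x

variable {H G}

lemma smul_mk_one (x : Γ) : x • ((1 : Γ) : Γ ⧸ H) = (x : Γ ⧸ H) := by
  rw [MulAction.Quotient.smul_mk, smul_eq_mul, mul_one]

lemma smul_mk_one_eq_iff {x : Γ} : x • ((1 : Γ) : Γ ⧸ H) = (1 : Γ) ↔ x ∈ H := by
  rw [← MulAction.mem_stabilizer_iff, MulAction.stabilizer_quotient]

namespace WreathLift

variable (Φ : WreathLift H G)

lemma left_mul (x y : Γ) (s : Γ ⧸ H) :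
    (Φ.toHom (x * y)).left s = (Φ.toHom x).left s * (Φ.toHom y).left (x⁻¹ • s) := by
  rw [map_mul, SemidirectProduct.mul_left, Φ.right_apply]
  rfl

def restrict : H →* G where
  toFun h := (Φ.toHom h).left ((1 : Γ) : Γ ⧸ H)
  map_one' := by simp
  map_mul' h h' := by
    simp only [Subgroup.coe_mul, left_mul,
      smul_mk_one_eq_iff.mpr (H.inv_mem h.2)]

lemma restrict_apply (h : H) : Φ.restrict h = (Φ.toHom h).left ((1 : Γ) : Γ ⧸ H) := rfl

lemma left_pow (x : Γ) : ∀ (j : ℕ) (s : Γ ⧸ H),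
    (Φ.toHom (x ^ j)).left s = orbitProd x⁻¹ (Φ.toHom x).left j s
  | 0, _ => by simp [orbitProd]
  | j + 1, s => by rw [pow_succ', left_mul, left_pow x j]; rfl

lemma restrict_eq_orbitProd {x y : Γ} {k l p q : ℕ} (hx : x ^ k ∈ H) (hy : y ^ l ∈ H) (w : H)
    (hw : (w : Γ) = (x ^ k) ^ p * (y ^ l) ^ q) :
    Φ.restrict w = orbitProd x⁻¹ (Φ.toHom x).left k ((1 : Γ) : Γ ⧸ H) ^ p *
      orbitProd y⁻¹ (Φ.toHom y).left l ((1 : Γ) : Γ ⧸ H) ^ q := by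
  have hw' : w = (⟨x ^ k, hx⟩ : H) ^ p * (⟨y ^ l, hy⟩ : H) ^ q := Subtype.ext hw
  rw [hw', map_mul, map_pow, map_pow, restrict_apply, restrict_apply, left_pow, left_pow]

end WreathLift

open Classical in
def transversal (s : Γ ⧸ H) : Γ := if s = ((1 : Γ) : Γ ⧸ H) then 1 else s.out

lemma transversal_smul_mk_one (s : Γ ⧸ H) : transversal s • ((1 : Γ) : Γ ⧸ H) = s := by
  rw [smul_mk_one]
  unfold transversal
  split_ifs with h
  · exact h.symm
  · exact QuotientGroup.out_eq' s

lemma transversal_mk_one : transversal ((1 : Γ) : Γ ⧸ H) = 1 := if_pos rfl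

lemma transversal_inv_smul (s : Γ ⧸ H) : (transversal s)⁻¹ • s = ((1 : Γ) : Γ ⧸ H) := by
  rw [inv_smul_eq_iff, transversal_smul_mk_one]

variable (H) in
def transversalCocycle (x : Γ) (s : Γ ⧸ H) : H :=
  ⟨(transversal s)⁻¹ * x * transversal (x⁻¹ • s), by
    rw [← smul_mk_one_eq_iff, mul_smul, mul_smul, transversal_smul_mk_one, smul_inv_smul,
      transversal_inv_smul]⟩

lemma transversalCocycle_mul (x y : Γ) (s : Γ ⧸ H) :
    transversalCocycle H (x * y) s =
      transversalCocycle H x s * transversalCocycle H y (x⁻¹ • s) := by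
  ext
  simp only [transversalCocycle, Subgroup.coe_mul, mul_inv_rev, mul_smul]
  group

lemma transversalCocycle_one (s : Γ ⧸ H) : transversalCocycle H 1 s = 1 := by
  ext
  simp [transversalCocycle]

lemma transversalCocycle_of_mem (h : H) :
    transversalCocycle H h ((1 : Γ) : Γ ⧸ H) = h := by
  ext
  simp [transversalCocycle, smul_mk_one_eq_iff.mpr (H.inv_mem h.2), transversal_mk_one]

lemma transversalCocycle_transversal (s : Γ ⧸ H) :
    transversalCocycle H (transversal s) s = 1 := by
  ext
  simp [transversalCocycle, transversal_inv_smul, transversal_mk_one]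

def WreathLift.induce (ψ : H →* G) (c : Γ ⧸ H → G) : WreathLift H G where
  toHom :=
    { toFun x := ⟨fun s => c s * ψ (transversalCocycle H x s) * (c (x⁻¹ • s))⁻¹, x⟩
      map_one' := by ext <;> simp [transversalCocycle_one]
      map_mul' x y := by
        ext s
        · simp only [SemidirectProduct.mul_left, transversalCocycle_mul, map_mul, mul_inv_rev,
            mul_smul, Pi.mul_apply, mulAutArrow_apply_apply]
          change _ = _ * (c (x⁻¹ • s) * ψ (transversalCocycle H y (x⁻¹ • s)) *
            (c (y⁻¹ • x⁻¹ • s))⁻¹)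
          group
        · rfl }
  right_apply _ := rfl

namespace WreathLift

variable (Φ : WreathLift H G)

def gauge (s : Γ ⧸ H) : G := (Φ.toHom (transversal s)).left s

lemma gauge_mk_one : Φ.gauge ((1 : Γ) : Γ ⧸ H) = 1 := by
  simp [gauge, transversal_mk_one]

lemma left_eq_gauge_mul (x : Γ) (s : Γ ⧸ H) :
    (Φ.toHom x).left s =
      Φ.gauge s * Φ.restrict (transversalCocycle H x s) * (Φ.gauge (x⁻¹ • s))⁻¹ := by
  have hx : x * transversal (x⁻¹ • s) = transversal s * transversalCocycle H x s := by
    simp only [transversalCocycle]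
    group
  have key := congrArg (fun y => (Φ.toHom y).left s) hx
  simp only [left_mul, transversal_inv_smul] at key
  rw [gauge, gauge, restrict_apply, ← key]
  group

lemma induce_restrict_gauge : induce Φ.restrict Φ.gauge = Φ := by
  ext x : 2
  refine SemidirectProduct.ext (funext fun s => ?_) (Φ.right_apply x).symm
  exact (Φ.left_eq_gauge_mul x s).symm

variable {ψ : H →* G} {c : Γ ⧸ H → G}

lemma restrict_induce (hc : c ((1 : Γ) : Γ ⧸ H) = 1) : (induce ψ c).restrict = ψ := by
  ext h
  change c _ * ψ (transversalCocycle H h _) * (c ((h : Γ)⁻¹ • _))⁻¹ = ψ h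
  rw [smul_mk_one_eq_iff.mpr (H.inv_mem h.2), hc, transversalCocycle_of_mem]
  group

lemma gauge_induce (hc : c ((1 : Γ) : Γ ⧸ H) = 1) : (induce ψ c).gauge = c := by
  ext s
  simp [gauge, induce, hc, transversal_inv_smul, transversalCocycle_transversal]

end WreathLift

variable (H G) in
def wreathLiftEquiv :
    WreathLift H G ≃ (H →* G) × {c : Γ ⧸ H → G // c ((1 : Γ) : Γ ⧸ H) = 1} where
  toFun Φ := (Φ.restrict, ⟨Φ.gauge, Φ.gauge_mk_one⟩)
  invFun p := .induce p.1 p.2.1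
  left_inv := WreathLift.induce_restrict_gauge
  right_inv p :=
    Prod.ext (WreathLift.restrict_induce p.2.2) (Subtype.ext (WreathLift.gauge_induce p.2.2))

end WreathLift

section Period

variable {Γ : Type*} [Group Γ] (H : Subgroup Γ) (x : Γ)

lemma pow_period_mk_one_mem : x ^ MulAction.period x ((1 : Γ) : Γ ⧸ H) ∈ H :=
  smul_mk_one_eq_iff.mp (MulAction.pow_period_smul _ _)

variable [H.FiniteIndex]

lemma period_mk_one_pos : 0 < MulAction.period x ((1 : Γ) : Γ ⧸ H) := by
  rw [MulAction.period_eq_minimalPeriod]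
  exact Nat.pos_of_neZero _

lemma period_mk_one_le_index : MulAction.period x ((1 : Γ) : Γ ⧸ H) ≤ H.index := by
  have := Fintype.ofFinite (Γ ⧸ H)
  rw [MulAction.period_eq_minimalPeriod, Subgroup.index, Nat.card_eq_fintype_card]
  exact Function.minimalPeriod_le_card

end Period

section FreeGroup

variable {ι : Type*} {H : Subgroup (FreeGroup ι)} {G : Type*} [Group G]

lemma freeGroupLift_right (d : ι → FreeGroup ι ⧸ H → G) (x : FreeGroup ι) :
    (FreeGroup.lift (fun i => (⟨d i, .of i⟩ : Wreath H G)) x).right = x := by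
  have : SemidirectProduct.rightHom.comp (FreeGroup.lift fun i => (⟨d i, .of i⟩ : Wreath H G)) =
      MonoidHom.id _ := FreeGroup.ext_hom _ _ fun i => by simp
  exact DFunLike.congr_fun this x

variable (H G) in
def freeWreathLiftEquiv : WreathLift H G ≃ (ι → FreeGroup ι ⧸ H → G) where
  toFun Φ i := (Φ.toHom (.of i)).left
  invFun d := ⟨FreeGroup.lift fun i => ⟨d i, .of i⟩, freeGroupLift_right d⟩
  left_inv Φ := WreathLift.ext <| FreeGroup.ext_hom _ _ fun i =>
    SemidirectProduct.ext (by simp) (by simp [Φ.right_apply])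
  right_inv d := by ext; simp

end FreeGroup

lemma _root_.Primitive.card_eval_eq {Γ : Type*} [Group Γ] {w : Γ} (hw : Primitive w)
    (G : Type*) [Group G] (g₁ g₂ : G) :
    Nat.card {ψ : Γ →* G // ψ w = g₁} = Nat.card {ψ : Γ →* G // ψ w = g₂} := by
  classical
  obtain ⟨ι, bas, i₀, rfl⟩ := hw
  suffices ∀ g : G, Nat.card {ψ : Γ →* G // ψ (bas i₀) = g} = Nat.card ({i // i ≠ i₀} → G) by
    rw [this, this]
  intro g
  calc Nat.card {ψ : Γ →* G // ψ (bas i₀) = g}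
      = Nat.card {v : ι → G // v i₀ = g} :=
        Nat.card_congr <| (bas.lift (H := G)).symm.subtypeEquiv fun ψ => by
          rw [FreeGroupBasis.lift_symm_apply, ← bas.repr_apply_coe, MulEquiv.symm_apply_apply]
    _ = Nat.card ({u : G // u = g} × ({i // i ≠ i₀} → G)) := Nat.card_congr <|
        ((Equiv.funSplitAt i₀ G).subtypeEquiv fun _ => Iff.rfl).trans
          (Equiv.prodSubtypeFstEquivSubtypeProd (p := fun u => u = g))
    _ = Nat.card ({i // i ≠ i₀} → G) := by rw [Nat.card_prod, Nat.card_unique, one_mul]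

lemma card_restrict_eq_card_hom {Γ G : Type*} [Group Γ] [Group G] (H : Subgroup Γ) (w : H)
    (g : G) :
    Nat.card {Φ : WreathLift H G // Φ.restrict w = g} =
      Nat.card {ψ : H →* G // ψ w = g} *
        Nat.card {c : Γ ⧸ H → G // c ((1 : Γ) : Γ ⧸ H) = 1} := by
  rw [← Nat.card_prod]
  exact Nat.card_congr <| ((wreathLiftEquiv H G).subtypeEquiv fun _ => Iff.rfl).trans
    (Equiv.prodSubtypeFstEquivSubtypeProd (p := fun ψ : H →* G => ψ w = g))

lemma card_restrict_eq_card_powMulPow (H : Subgroup F2) [H.FiniteIndex] {p q : ℕ} (w : H)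
    (hw : (w : F2) = (a ^ MulAction.period a ((1 : F2) : F2 ⧸ H)) ^ p *
      (b ^ MulAction.period b ((1 : F2) : F2 ⧸ H)) ^ q)
    (G : Type*) [Group G] (g : G) :
    Nat.card {Φ : WreathLift H G // Φ.restrict w = g} =
      Nat.card {uv : G × G // uv.1 ^ p * uv.2 ^ q = g} *
        Nat.card (({s : F2 ⧸ H // s ≠ (1 : F2)} → G) × ({s : F2 ⧸ H // s ≠ (1 : F2)} → G)) := by
  classical
  have hmoved (x : F2) (r : ℕ) (hr : 0 < r) (hrx : r < MulAction.period x ((1 : F2) : F2 ⧸ H)) :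
      x⁻¹ ^ r • ((1 : F2) : F2 ⧸ H) ≠ (1 : F2) :=
    MulAction.pow_smul_ne_of_lt_period hr (by rwa [MulAction.period_inv])
  obtain ⟨K, hK⟩ := Nat.exists_eq_succ_of_ne_zero (period_mk_one_pos H a).ne'
  obtain ⟨L, hL⟩ := Nat.exists_eq_succ_of_ne_zero (period_mk_one_pos H b).ne'
  let e := (freeWreathLiftEquiv H G).trans <| (piFinTwoEquiv _).trans <|
    (Equiv.prodCongr (orbitProdSplit a⁻¹ _ K (hK ▸ hmoved a))
      (orbitProdSplit b⁻¹ _ L (hL ▸ hmoved b))).trans (Equiv.prodProdProdComm _ _ _ _)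
  have hcond (Φ : WreathLift H G) : Φ.restrict w = g ↔ (e Φ).1.1 ^ p * (e Φ).1.2 ^ q = g := by
    rw [Φ.restrict_eq_orbitProd (pow_period_mk_one_mem H a) (pow_period_mk_one_mem H b) w hw,
      hK, hL]
    simp [e, orbitProdSplit_fst, freeWreathLiftEquiv, a, b]
  rw [← Nat.card_prod]
  exact Nat.card_congr ((e.subtypeEquiv hcond).trans Equiv.prodSubtypeFstEquivSubtypeProd)

def PowMulPowUniform (p q : ℕ) : Prop :=
  ∀ (G : Type) [Group G] [Finite G] (g₁ g₂ : G),
    Nat.card {uv : G × G // uv.1 ^ p * uv.2 ^ q = g₁} =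
      Nat.card {uv : G × G // uv.1 ^ p * uv.2 ^ q = g₂}

theorem powMulPowUniform_of_primitive (H : Subgroup F2) [H.FiniteIndex] {p q : ℕ} (w : H)
    (hw : (w : F2) = (a ^ MulAction.period a ((1 : F2) : F2 ⧸ H)) ^ p *
      (b ^ MulAction.period b ((1 : F2) : F2 ⧸ H)) ^ q)
    (hprim : Primitive w) : PowMulPowUniform p q := by
  intro G _ _ g₁ g₂
  have h₁ := card_restrict_eq_card_powMulPow H w hw G g₁
  rw [card_restrict_eq_card_hom, hprim.card_eval_eq G g₁ g₂, ← card_restrict_eq_card_hom,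
    card_restrict_eq_card_powMulPow H w hw G g₂] at h₁
  exact (Nat.eq_of_mul_eq_mul_right Nat.card_pos h₁).symm

lemma not_powMulPowUniform_of_dvd {p q π : ℕ} (hπ : 1 < π) (hp : π ∣ p) (hq : π ∣ q) :
    ¬ PowMulPowUniform p q := by
  intro h
  have := Fact.mk hπ
  have hpow (u : Multiplicative (ZMod π)) {r : ℕ} (hr : π ∣ r) : u ^ r = 1 := by
    obtain ⟨t, rfl⟩ := hr
    have hu : u ^ π = 1 := by
      simpa [Nat.card_congr Multiplicative.toAdd] using pow_card_eq_one' (x := u)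
    rw [pow_mul, hu, one_pow]
  have hempty : IsEmpty {uv : Multiplicative (ZMod π) × Multiplicative (ZMod π) //
      uv.1 ^ p * uv.2 ^ q = .ofAdd 1} :=
    ⟨fun ⟨uv, huv⟩ => one_ne_zero (α := ZMod π) (by simpa [hpow _ hp, hpow _ hq] using huv.symm)⟩
  have hne : Nonempty {uv : Multiplicative (ZMod π) × Multiplicative (ZMod π) //
      uv.1 ^ p * uv.2 ^ q = 1} := ⟨⟨(1, 1), by simp⟩⟩
  exact Nat.card_pos.ne' ((h (Multiplicative (ZMod π)) 1 (.ofAdd 1)).trans Nat.card_of_isEmpty)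

lemma not_powMulPowUniform_of_mem {p q : ℕ}
    (h : (p, q) ∈ ({(2, 3), (3, 2), (3, 4), (4, 3)} : Finset (ℕ × ℕ))) :
    ¬ PowMulPowUniform p q := by
  intro hu
  have key := hu (DihedralGroup 3) 1 (.r 1)
  rw [Nat.card_eq_fintype_card, Nat.card_eq_fintype_card] at key
  simp only [Finset.mem_insert, Finset.mem_singleton, Prod.mk.injEq] at h
  rcases h with ⟨rfl, rfl⟩ | ⟨rfl, rfl⟩ | ⟨rfl, rfl⟩ | ⟨rfl, rfl⟩ <;> revert key <;> decide

lemma dvd_of_lt_smallestNonDivisor {n j : ℕ} (hj : 0 < j) (h : j < smallestNonDivisor n) :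
    j ∣ n := by
  by_contra hnd
  have hj1 : j ≠ 1 := fun h1 => hnd (h1 ▸ one_dvd n)
  exact (Nat.sInf_le (⟨by omega, hnd⟩ : j ∈ {d : ℕ | 2 ≤ d ∧ ¬ d ∣ n})).not_gt h

lemma smallestNonDivisor_le {n d : ℕ} (hd : 2 ≤ d) (h : ¬ d ∣ n) : smallestNonDivisor n ≤ d :=
  Nat.sInf_le ⟨hd, h⟩

lemma dvd_mul_of_coprime_div {n k l : ℕ} (hk : k ∣ n) (hl : l ∣ n)
    (h : Nat.Coprime (n / k) (n / l)) : n ∣ k * l := by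
  have hkl : n / k ∣ l * (n / l) := by rw [Nat.mul_div_cancel' hl]; exact Nat.div_dvd_of_dvd hk
  calc n = k * (n / k) := (Nat.mul_div_cancel' hk).symm
    _ ∣ k * l := mul_dvd_mul_left k (h.dvd_of_dvd_mul_right hkl)

section LcmIcc

lemma lcm_Icc_pos (i : ℕ) : 0 < (Finset.Icc 1 i).lcm id :=
  Nat.pos_of_ne_zero fun h => by simpa using Finset.lcm_eq_zero_iff.mp h

lemma lcm_Icc_dvd_factorial (i : ℕ) : (Finset.Icc 1 i).lcm id ∣ i.factorial :=
  Finset.lcm_dvd fun _ hj => Nat.dvd_factorial (Finset.mem_Icc.mp hj).1 (Finset.mem_Icc.mp hj).2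

lemma choose_dvd_lcm_Icc {i r : ℕ} (hi : 2 ≤ i) (hr : r ≤ i - 1) :
    (i - 1).choose r ∣ (Finset.Icc 1 i).lcm id := by
  rw [← Nat.factorization_le_iff_dvd (Nat.choose_pos hr).ne' (lcm_Icc_pos i).ne']
  intro π
  by_cases hπ : π.Prime
  · have hle : π ^ ((i - 1).choose r).factorization π ≤ i - 1 :=
      Nat.pow_factorization_choose_le (by omega)
    refine (hπ.pow_dvd_iff_le_factorization (lcm_Icc_pos i).ne').mp ?_
    exact Finset.dvd_lcm (f := id) (Finset.mem_Icc.mpr ⟨Nat.one_le_pow _ _ hπ.pos, by omega⟩)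
  · simp [Nat.factorization_eq_zero_of_not_prime _ hπ]

/-- The binomial coefficients `(i - 1).choose r`, which sum to `2 ^ (i - 1)`, all divide the lcm. -/
lemma two_pow_le_mul_lcm_Icc {i : ℕ} (hi : 2 ≤ i) :
    2 ^ (i - 1) ≤ i * (Finset.Icc 1 i).lcm id := by
  calc 2 ^ (i - 1) = ∑ r ∈ Finset.range i, (i - 1).choose r := by
        rw [← Nat.sum_range_choose, Nat.sub_add_cancel (by omega)]
    _ ≤ ∑ _r ∈ Finset.range i, (Finset.Icc 1 i).lcm id :=
        Finset.sum_le_sum fun r hr => Nat.le_of_dvd (lcm_Icc_pos i)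
          (choose_dvd_lcm_Icc hi (by have := Finset.mem_range.mp hr; omega))
    _ = i * (Finset.Icc 1 i).lcm id := by simp

lemma mul_sq_lt_two_pow {i : ℕ} (hi : 15 ≤ i) : i * (2 * i - 1) ^ 2 < 2 ^ (i - 1) := by
  induction i, hi using Nat.le_induction with
  | base => norm_num
  | succ j hj ih =>
    obtain ⟨B, hB⟩ : ∃ B, 2 * j - 1 = B := ⟨_, rfl⟩
    have hB2 : B + 1 = 2 * j := by omega
    rw [show 2 * (j + 1) - 1 = B + 2 by omega, show j + 1 - 1 = j - 1 + 1 by omega,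
      pow_succ 2 (j - 1)]
    rw [hB] at ih
    nlinarith

lemma smallestNonDivisor_lcm_Icc_le {i P : ℕ} (hP : P.Prime) (hiP : i < P) :
    smallestNonDivisor ((Finset.Icc 1 i).lcm id) ≤ P :=
  smallestNonDivisor_le hP.two_le fun h =>
    hiP.not_ge ((hP.dvd_factorial).mp (h.trans (lcm_Icc_dvd_factorial i)))

/-- Bertrand's postulate bounds the smallest non-divisor by `2 * i`; small `i` are checked. -/
lemma sq_pred_smallestNonDivisor_lt {i : ℕ} (hi : 5 ≤ i) :
    (smallestNonDivisor ((Finset.Icc 1 i).lcm id) - 1) ^ 2 < (Finset.Icc 1 i).lcm id := by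
  suffices ∃ P, P.Prime ∧ i < P ∧ (P - 1) ^ 2 < (Finset.Icc 1 i).lcm id by
    obtain ⟨P, hP, hiP, hlt⟩ := this
    exact lt_of_le_of_lt (Nat.pow_le_pow_left (by
      have := smallestNonDivisor_lcm_Icc_le hP hiP; omega) 2) hlt
  by_cases hi15 : 15 ≤ i
  · obtain ⟨P, hP, hiP, hP2⟩ := Nat.exists_prime_lt_and_le_two_mul i (by omega)
    refine ⟨P, hP, hiP, ?_⟩
    have h1 := two_pow_le_mul_lcm_Icc (i := i) (by omega)
    have h2 := mul_sq_lt_two_pow hi15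
    have h3 : (P - 1) ^ 2 ≤ (2 * i - 1) ^ 2 := Nat.pow_le_pow_left (by omega) 2
    nlinarith
  · interval_cases i
    all_goals first
      | (refine ⟨7, ?_, ?_, ?_⟩ <;> decide)
      | (refine ⟨11, ?_, ?_, ?_⟩ <;> decide)
      | (refine ⟨13, ?_, ?_, ?_⟩ <;> decide)
      | (refine ⟨17, ?_, ?_, ?_⟩ <;> decide)

lemma lcm_Icc_div_mem_of_dvd_mul {i k l : ℕ} (hi : 3 ≤ i) (hk : 0 < k) (hl : 0 < l)
    (hkd : k < smallestNonDivisor ((Finset.Icc 1 i).lcm id))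
    (hld : l < smallestNonDivisor ((Finset.Icc 1 i).lcm id))
    (h : (Finset.Icc 1 i).lcm id ∣ k * l) :
    ((Finset.Icc 1 i).lcm id / k, (Finset.Icc 1 i).lcm id / l) ∈
      ({(2, 3), (3, 2), (3, 4), (4, 3)} : Finset (ℕ × ℕ)) := by
  by_cases hi5 : 5 ≤ i
  · have hsq := sq_pred_smallestNonDivisor_lt hi5
    have hle : (Finset.Icc 1 i).lcm id ≤ k * l := Nat.le_of_dvd (Nat.mul_pos hk hl) h
    have hkl : k * l ≤ (smallestNonDivisor ((Finset.Icc 1 i).lcm id) - 1) ^ 2 := by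
      rw [sq]; exact Nat.mul_le_mul (by omega) (by omega)
    omega
  · interval_cases i
    · have hd : smallestNonDivisor 6 ≤ 4 := smallestNonDivisor_le (by norm_num) (by norm_num)
      rw [show (Finset.Icc 1 3).lcm id = 6 by decide] at *
      have hk' := hkd.trans_le hd
      have hl' := hld.trans_le hd
      interval_cases k <;> interval_cases l <;> revert h <;> decide
    · have hd : smallestNonDivisor 12 ≤ 5 := smallestNonDivisor_le (by norm_num) (by norm_num)
      rw [show (Finset.Icc 1 4).lcm id = 12 by decide] at *
      have hk' := hkd.trans_le hd
      have hl' := hld.trans_le hd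
      interval_cases k <;> interval_cases l <;> revert h <;> decide

end LcmIcc

end PrimitivePower

open PrimitivePower in
theorem not_primitive_in_small_index_subgroup (i : ℕ) (hi : 3 ≤ i)
    (n : ℕ) (hn : n = (Finset.Icc 1 i).lcm id)
    (H : Subgroup F2) (m : ℕ) (hm : H.index = m) (hm0 : 0 < m)
    (hmd : m < smallestNonDivisor n)
    (hg : a ^ n * b ^ n ∈ H) :
    ¬ Primitive (⟨a ^ n * b ^ n, hg⟩ : H) := by
  intro hprim
  have : H.FiniteIndex := ⟨by omega⟩
  set k := MulAction.period a ((1 : F2) : F2 ⧸ H)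
  set l := MulAction.period b ((1 : F2) : F2 ⧸ H)
  have hk0 : 0 < k := period_mk_one_pos H a
  have hl0 : 0 < l := period_mk_one_pos H b
  have hkd : k < smallestNonDivisor n := (period_mk_one_le_index H a).trans_lt (hm ▸ hmd)
  have hld : l < smallestNonDivisor n := (period_mk_one_le_index H b).trans_lt (hm ▸ hmd)
  have hkn := dvd_of_lt_smallestNonDivisor hk0 hkd
  have hln := dvd_of_lt_smallestNonDivisor hl0 hld
  have hw : a ^ n * b ^ n = (a ^ k) ^ (n / k) * (b ^ l) ^ (n / l) := by
    rw [← pow_mul, ← pow_mul, Nat.mul_div_cancel' hkn, Nat.mul_div_cancel' hln]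
  have huniform := powMulPowUniform_of_primitive H _ hw hprim
  by_cases hcop : Nat.Coprime (n / k) (n / l)
  · subst hn
    exact not_powMulPowUniform_of_mem (lcm_Icc_div_mem_of_dvd_mul hi hk0 hl0 hkd hld
      (dvd_mul_of_coprime_div hkn hln hcop)) huniform
  · have hpos : 0 < n / k := Nat.div_pos (Nat.le_of_dvd (hn ▸ lcm_Icc_pos i) hkn) hk0
    exact not_powMulPowUniform_of_dvd (by have := Nat.gcd_pos_of_pos_left (n / l) hpos; omega)
      (Nat.gcd_dvd_left _ _) (Nat.gcd_dvd_right _ _) huniform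
end
end

section
/- For every integer n ≥ 2, the simplicity index of a^n b^n in F(a,b) equals 2. -/
noncomputable section

/-!
The kernel `H` of the mod-2 exponent sum `F₂ → ℤ/2` has index 2 and is free on the Schreier
generators `x = a²`, `y = b²`, `z = ab`. For `n = 2k` the element `aⁿbⁿ = xᵏyᵏ` lies in the free
factor `⟨x, y⟩`; for `n = 2k + 1` it is `xᵏzyᵏ`, which is primitive.

Conversely, a proper free factor `A` of `F₂` is infinite cyclic, generated by some `u`, and the
free product decomposition extends `A ≃ ℤ` to a homomorphism `π : F₂ → ℤ`. If `aⁿbⁿ = uᵐ`, then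
`m = π(aⁿbⁿ) = n (π a + π b)`, so `aⁿbⁿ` would be an `n`-th power. It is not: in the affine
representation `a ↦ (z ↦ ζz)`, `b ↦ (z ↦ ζz + 1)` with `ζ` a primitive `2n`-th root of unity,
an `n`-th root of `aⁿbⁿ` has slope `ζ²`, so its `n`-th power is the identity, whereas `aⁿbⁿ`
moves `0`.
-/

open Function Monoid
open scoped Monoid.Coprod

section SimpleElem

variable {G G' : Type*} [Group G] [Group G']

theorem Subgroup.bijective_coprodLift_of_inverse {A B : Subgroup G} (ψ : G →* A ∗ B)
    (hψ : (Coprod.lift A.subtype B.subtype).comp ψ = .id G)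
    (hA : ψ.comp A.subtype = Coprod.inl) (hB : ψ.comp B.subtype = Coprod.inr) :
    Bijective (Coprod.lift A.subtype B.subtype) := by
  have hψ' : ψ.comp (Coprod.lift A.subtype B.subtype) = .id _ :=
    Coprod.hom_ext (by rw [MonoidHom.comp_assoc, Coprod.lift_comp_inl, hA]; rfl)
      (by rw [MonoidHom.comp_assoc, Coprod.lift_comp_inr, hB]; rfl)
  exact bijective_iff_has_inverse.mpr ⟨ψ, DFunLike.congr_fun hψ', DFunLike.congr_fun hψ⟩

theorem SimpleElem.map {g : G} (h : SimpleElem g) (e : G ≃* G') : SimpleElem (e g) := by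
  obtain ⟨A, B, hA, hB, hgA, hbij⟩ := h
  refine ⟨A.map (e : G →* G'), B.map (e : G →* G'),
    (Subgroup.map_eq_bot_iff_of_injective _ e.injective).not.mpr hA,
    (Subgroup.map_eq_bot_iff_of_injective _ e.injective).not.mpr hB, ⟨g, hgA, rfl⟩, ?_⟩
  have hcomp : (Coprod.lift (A.map (e : G →* G')).subtype (B.map (e : G →* G')).subtype).comp
      (Coprod.map (e.subgroupMap A : A →* _) (e.subgroupMap B : B →* _)) =
      (e : G →* G').comp (Coprod.lift A.subtype B.subtype) :=
    Coprod.hom_ext (by ext; simp only [MonoidHom.comp_apply, Coprod.lift_apply_inl]; rfl)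
      (by ext; simp only [MonoidHom.comp_apply, Coprod.lift_apply_inr]; rfl)
  have hmap := (MulEquiv.coprodCongr (e.subgroupMap A) (e.subgroupMap B)).bijective
  rw [MulEquiv.coprodCongr_apply] at hmap
  refine (Bijective.of_comp_iff _ hmap).mp ?_
  rw [← MonoidHom.coe_comp, hcomp, MonoidHom.coe_comp]
  exact e.bijective.comp hbij

theorem Subgroup.exists_extend_of_bijective_coprodLift {A B : Subgroup G}
    (h : Bijective (Coprod.lift A.subtype B.subtype)) {P : Type*} [Monoid P] (f : A →* P) :
    ∃ π : G →* P, ∀ x : A, π x = f x :=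
  ⟨(Coprod.lift f 1).comp (MulEquiv.ofBijective _ h).symm.toMonoidHom, fun x => by
    simpa using congrArg (Coprod.lift f 1) ((MulEquiv.ofBijective _ h).symm_apply_apply (.inl x))⟩

end SimpleElem

section FreeFactor

open FreeGroup Subgroup

variable {ι : Type*}

theorem FreeGroup.simpleElem_of_mem_closure {S : Set ι} (hS : S.Nonempty) (hSc : Sᶜ.Nonempty)
    {w : FreeGroup ι} (hw : w ∈ closure (of '' S)) : SimpleElem w := by
  classical
  set A := closure (of '' S)
  set B := closure (of '' Sᶜ)
  let ψ : FreeGroup ι →* A ∗ B := FreeGroup.lift fun i =>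
    if h : i ∈ S then Coprod.inl ⟨of i, subset_closure ⟨i, h, rfl⟩⟩
    else Coprod.inr ⟨of i, subset_closure ⟨i, h, rfl⟩⟩
  have ψ_of_mem {i} (h : i ∈ S) :
      ψ (of i) = Coprod.inl ⟨of i, subset_closure ⟨i, h, rfl⟩⟩ := by
    simp [ψ, h]
  have ψ_of_not_mem {i} (h : i ∉ S) :
      ψ (of i) = Coprod.inr ⟨of i, subset_closure ⟨i, h, rfl⟩⟩ := by
    simp [ψ, h]
  obtain ⟨i, hi⟩ := hS
  obtain ⟨j, hj⟩ := hSc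
  refine ⟨A, B, ?_, ?_, hw, Subgroup.bijective_coprodLift_of_inverse ψ ?_ ?_ ?_⟩
  · exact ne_bot_iff_exists_ne_one.mpr
      ⟨⟨of i, subset_closure ⟨i, hi, rfl⟩⟩, Subtype.coe_ne_coe.mp (of_ne_one i)⟩
  · exact ne_bot_iff_exists_ne_one.mpr
      ⟨⟨of j, subset_closure ⟨j, hj, rfl⟩⟩, Subtype.coe_ne_coe.mp (of_ne_one j)⟩
  · ext k
    by_cases hk : k ∈ S <;> simp [ψ_of_mem, ψ_of_not_mem, hk]
  · refine MonoidHom.eq_of_eqOn_dense closure_closure_coe_preimage ?_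
    rintro ⟨_, _⟩ ⟨k, hk, rfl⟩
    simp [ψ_of_mem hk]
  · refine MonoidHom.eq_of_eqOn_dense closure_closure_coe_preimage ?_
    rintro ⟨_, _⟩ ⟨k, hk, rfl⟩
    simp [ψ_of_not_mem hk]

end FreeFactor

section FreeFactorRankTwo

local notation "C₂" => Multiplicative (ZMod 2)

theorem FreeGroupBasis.natCard_monoidHom {ι G : Type*} [Group G] (bG : FreeGroupBasis ι G)
    (P : Type*) [Group P] : Nat.card (G →* P) = Nat.card (ι → P) :=
  Nat.card_congr bG.lift.symm

theorem FreeGroupBasis.nonempty_of_ne_bot {ι G : Type*} [Group G] {A : Subgroup G}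
    (bA : FreeGroupBasis ι A) (hA : A ≠ ⊥) : Nonempty ι := by
  by_contra h
  rw [not_nonempty_iff] at h
  obtain ⟨x, hx⟩ := Subgroup.ne_bot_iff_exists_ne_one.mp hA
  exact hx (bA.repr.injective (Subsingleton.elim _ _))

theorem Monoid.Coprod.natCard_monoidHom (M N P : Type*) [Monoid M] [Monoid N] [Monoid P] :
    Nat.card (M ∗ N →* P) = Nat.card (M →* P) * Nat.card (N →* P) := by
  rw [← Nat.card_prod]
  exact Nat.card_congr Coprod.liftEquiv.symm

theorem finite_of_natCard_fun_ne_zero {ι P : Type*} [Nontrivial P] (h : Nat.card (ι → P) ≠ 0) :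
    Finite ι := by
  by_contra hι
  rw [not_finite_iff_infinite] at hι
  exact h Nat.card_eq_zero_of_infinite

/-- Counting homomorphisms to `C₂`: `2 ^ rank A * 2 ^ rank B = 2 ^ 2`. -/
theorem nonempty_mulEquiv_int_of_bijective_coprodLift {G : Type*} [Group G]
    (bG : FreeGroupBasis (Fin 2) G) {A B : Subgroup G} (hA : A ≠ ⊥) (hB : B ≠ ⊥)
    (h : Bijective (Coprod.lift A.subtype B.subtype)) : Nonempty (A ≃* Multiplicative ℤ) := by
  have := bG.isFreeGroup
  obtain ⟨ιA, ⟨bA⟩⟩ := IsFreeGroup.nonempty_basis (G := A)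
  obtain ⟨ιB, ⟨bB⟩⟩ := IsFreeGroup.nonempty_basis (G := B)
  have hcard : Nat.card (ιA → C₂) * Nat.card (ιB → C₂) = 2 ^ 2 := by
    rw [← bA.natCard_monoidHom, ← bB.natCard_monoidHom, ← Coprod.natCard_monoidHom,
      Nat.card_congr (MulEquiv.ofBijective _ h).monoidHomCongrLeftEquiv, bG.natCard_monoidHom,
      Nat.card_fun]
    simp
  have hne : Nat.card (ιA → C₂) * Nat.card (ιB → C₂) ≠ 0 := by rw [hcard]; norm_num
  have : Finite ιA := finite_of_natCard_fun_ne_zero (left_ne_zero_of_mul hne)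
  have : Finite ιB := finite_of_natCard_fun_ne_zero (right_ne_zero_of_mul hne)
  have : Nonempty ιA := bA.nonempty_of_ne_bot hA
  have : Nonempty ιB := bB.nonempty_of_ne_bot hB
  rw [Nat.card_fun, Nat.card_fun, show Nat.card C₂ = 2 by simp, ← pow_add] at hcard
  have hA1 : Nat.card ιA = 1 := by
    have := Nat.pow_right_injective le_rfl hcard
    have := Nat.card_pos (α := ιA)
    have := Nat.card_pos (α := ιB)
    omega
  obtain ⟨_, ⟨i⟩⟩ := Nat.card_eq_one_iff_unique.mp hA1
  have : Unique ιA := uniqueOfSubsingleton i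
  exact ⟨bA.repr.trans FreeGroup.mulEquivIntOfUnique⟩

theorem SimpleElem.exists_eq_pow {G : Type*} [Group G] (bG : FreeGroupBasis (Fin 2) G) {g : G}
    (hg : SimpleElem g) {n : ℕ} (hdvd : ∀ π : G →* Multiplicative ℤ, (n : ℤ) ∣ (π g).toAdd) :
    ∃ w, g = w ^ n := by
  obtain ⟨A, B, hA, hB, hgA, h⟩ := hg
  obtain ⟨e⟩ := nonempty_mulEquiv_int_of_bijective_coprodLift bG hA hB h
  obtain ⟨π, hπ⟩ := Subgroup.exists_extend_of_bijective_coprodLift h (e : A →* Multiplicative ℤ)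
  obtain ⟨k, hk⟩ := hdvd π
  refine ⟨e.symm (.ofAdd k), ?_⟩
  have : e ⟨g, hgA⟩ = e (e.symm (.ofAdd k) ^ n) := by
    have hgπ : e ⟨g, hgA⟩ = π g := (hπ ⟨g, hgA⟩).symm
    rw [map_pow, e.apply_symm_apply, ← ofAdd_nsmul, hgπ, ← ofAdd_toAdd (π g), hk]
    simp [mul_comm]
  simpa using congrArg Subtype.val (e.injective this)

end FreeFactorRankTwo

section Affine

variable (K : Type*) [Field K]

/-- Affine permutations `z ↦ α * z + β` of `K`, paired with their slope `α`. -/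
def affineGroup : Subgroup (Equiv.Perm K × Kˣ) where
  carrier := {p | ∀ z w, p.1 z - p.1 w = p.2 * (z - w)}
  mul_mem' {p q} hp hq z w := by
    simp only [Prod.fst_mul, Prod.snd_mul, Equiv.Perm.mul_apply, Units.val_mul]
    rw [hp, hq, mul_assoc]
  one_mem' z w := by simp
  inv_mem' {p} hp z w := by
    have := hp (p.1⁻¹ z) (p.1⁻¹ w)
    simp only [Equiv.Perm.coe_inv, Equiv.apply_symm_apply] at this
    simp only [Prod.fst_inv, Prod.snd_inv, Units.val_inv_eq_inv_val]
    field_simp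
    simpa [mul_comm] using this.symm

variable {K}

namespace affineGroup

variable {p : Equiv.Perm K × Kˣ} (hp : p ∈ affineGroup K)
include hp

theorem exists_fixedPt (h1 : p.2 ≠ 1) : ∃ c, p.1 c = c := by
  have h1' : (1 - p.2 : K) ≠ 0 := sub_ne_zero.mpr (Ne.symm (Units.val_eq_one.not.mpr h1))
  refine ⟨p.1 0 / (1 - p.2), ?_⟩
  have := hp (p.1 0 / (1 - p.2)) 0
  field_simp at this ⊢
  linear_combination this

theorem pow_apply {c : K} (hc : p.1 c = c) (m : ℕ) (z : K) :
    (p.1 ^ m) z = (p.2 ^ m : Kˣ) * (z - c) + c := by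
  have := pow_mem hp m z c
  rw [Prod.pow_fst, Prod.pow_snd, Equiv.Perm.pow_apply_eq_self_of_apply_eq_self hc] at this
  linear_combination this

theorem pow_eq_one {m : ℕ} (hm : p.2 ^ m = 1) (h1 : p.2 ≠ 1) : p.1 ^ m = 1 := by
  obtain ⟨c, hc⟩ := exists_fixedPt hp h1
  ext z
  simp [pow_apply hp hc, hm]

end affineGroup

end Affine

section SchreierBasis

open FreeGroup Subgroup

abbrev F3 := FreeGroup (Fin 3)

def parity : F2 →* Multiplicative (ZMod 2) := FreeGroup.lift fun _ => .ofAdd 1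

theorem parity_a : parity a = .ofAdd 1 := lift_apply_of

theorem index_ker_parity : parity.ker.index = 2 := by
  have hsurj : Surjective parity := fun x => by
    obtain rfl | rfl : x = 1 ∨ x = .ofAdd 1 := by revert x; decide
    exacts [⟨1, map_one _⟩, ⟨a, parity_a⟩]
  rw [index_ker, MonoidHom.range_eq_top.mpr hsurj, card_top, Nat.card_eq_fintype_card]
  rfl

/-- `a², b², ab` are the Schreier generators of `parity.ker` for the transversal `{1, a}`. -/
def schreierHom : F3 →* F2 := FreeGroup.lift ![a * a, b * b, a * b]

theorem range_schreierHom : schreierHom.range = parity.ker := by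
  set R := schreierHom.range
  have hle : R ≤ parity.ker := range_lift_le <| by
    rintro _ ⟨i, rfl⟩
    fin_cases i <;> simp [parity, a, b] <;> decide
  refine le_antisymm hle fun t ht => ?_
  have hgen : ∀ i, a * of i ∈ R ∧ of i * a⁻¹ ∈ R := by
    have haa : a * a ∈ R := ⟨of 0, lift_apply_of⟩
    have hbb : b * b ∈ R := ⟨of 1, lift_apply_of⟩
    have hab : a * b ∈ R := ⟨of 2, lift_apply_of⟩
    refine Fin.forall_fin_two.mpr ⟨⟨haa, ?_⟩, ⟨hab, ?_⟩⟩
    · change a * a⁻¹ ∈ R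
      simp
    · change b * a⁻¹ ∈ R
      simpa [mul_assoc] using mul_mem hbb (inv_mem hab)
  have cover : ∀ t : F2, t ∈ R ∨ t * a⁻¹ ∈ R := by
    intro t
    have ht : t ∈ closure (Set.range (of : Fin 2 → F2)) := by rw [closure_range_of]; trivial
    induction ht using closure_induction_right with
    | one => exact .inl R.one_mem
    | mul_right x _ y hy ih =>
      obtain ⟨i, rfl⟩ := hy
      rcases ih with h | h
      · exact .inr (by simpa [mul_assoc] using mul_mem h (hgen i).2)
      · exact .inl (by simpa [mul_assoc] using mul_mem h (hgen i).1)
    | mul_inv_cancel x _ y hy ih =>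
      obtain ⟨i, rfl⟩ := hy
      rcases ih with h | h
      · exact .inr (by simpa [mul_assoc] using mul_mem h (inv_mem (hgen i).1))
      · exact .inl (by simpa [mul_assoc] using mul_mem h (inv_mem (hgen i).2))
  refine (cover t).resolve_right fun h => ?_
  have := hle h
  rw [MonoidHom.mem_ker, _root_.map_mul, _root_.map_inv, MonoidHom.mem_ker.mp ht, parity_a]
    at this
  exact absurd this (by decide)

/-- The action of `F₂` on the cosets `parity.ker`, `parity.ker * a`, lifted to the wreath product
`F₃ ≀ C₂` by recording the Schreier generators picked up; on `parity.ker` its first coordinate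
inverts `schreierHom`. -/
def wreathRep : F2 →* (F3 × F3) ⋊[MonoidHom.id _] MulAut (F3 × F3) :=
  FreeGroup.lift ![⟨(1, of 0), MulEquiv.prodComm⟩, ⟨(of 1 * (of 2)⁻¹, of 2), MulEquiv.prodComm⟩]

def schreierConjA : F3 →* F3 :=
  FreeGroup.lift ![of 0, of 2 * of 1 * (of 2)⁻¹, of 0 * of 1 * (of 2)⁻¹]

theorem wreathRep_comp_schreierHom :
    wreathRep.comp schreierHom =
      SemidirectProduct.inl.comp ((MonoidHom.id F3).prod schreierConjA) := by
  ext i <;> fin_cases i <;> simp [wreathRep, schreierConjA, schreierHom, a, b, mul_assoc]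

theorem schreierHom_injective : Injective schreierHom := by
  refine Injective.of_comp (f := wreathRep) ?_
  rw [← MonoidHom.coe_comp, wreathRep_comp_schreierHom, MonoidHom.coe_comp]
  exact SemidirectProduct.inl_injective.comp fun u v h => congrArg Prod.fst h

def schreierEquiv : F3 ≃* parity.ker :=
  (MonoidHom.ofInjective schreierHom_injective).trans (MulEquiv.subgroupCongr range_schreierHom)

def twistHom (k : ℤ) : F3 →* F3 := FreeGroup.lift ![of 0, of 1, of 0 ^ k * of 2 * of 1 ^ k]

def twist (k : ℤ) : F3 ≃* F3 :=
  (twistHom k).toMulEquiv (twistHom (-k))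
    (by ext i; fin_cases i <;> simp [twistHom, mul_assoc])
    (by ext i; fin_cases i <;> simp [twistHom, mul_assoc])

theorem twist_of_two (k : ℤ) : twist k (of 2) = of 0 ^ k * of 2 * of 1 ^ k := by
  simp [twist, twistHom]

theorem exists_simpleElem_schreierHom_eq (n : ℕ) :
    ∃ w : F3, SimpleElem w ∧ schreierHom w = a ^ n * b ^ n := by
  obtain ⟨k, rfl | rfl⟩ := Nat.even_or_odd' n
  · have hw : of 0 ^ k * of 1 ^ k ∈ Subgroup.closure (of '' ({0, 1} : Set (Fin 3))) :=
      mul_mem (pow_mem (Subgroup.subset_closure (Set.mem_image_of_mem _ (by simp))) k)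
        (pow_mem (Subgroup.subset_closure (Set.mem_image_of_mem _ (by simp))) k)
    refine ⟨_, simpleElem_of_mem_closure ⟨0, by simp⟩ ⟨2, by simp⟩ hw, ?_⟩
    simp [schreierHom, pow_mul, sq]
  · have h2 : SimpleElem (of 2 : F3) :=
      simpleElem_of_mem_closure (S := {2}) ⟨2, rfl⟩ ⟨0, by simp⟩
        (Subgroup.subset_closure ⟨2, rfl, rfl⟩)
    refine ⟨_, h2.map (twist k), ?_⟩
    simp [twist_of_two, schreierHom, pow_succ, pow_mul, mul_assoc]
    exact (((Commute.refl b).mul_right (Commute.refl b)).pow_right k).eq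

end SchreierBasis

section NotPower

open FreeGroup

variable {K : Type*} [Field K]

def exponentSum : F2 →* Multiplicative ℤ := FreeGroup.lift fun _ => .ofAdd 1

def affineRep (ζ : Kˣ) : F2 →* affineGroup K :=
  FreeGroup.lift ![⟨(Units.mulLeft ζ, ζ), fun z w => by simp [mul_sub]⟩,
    ⟨((Units.mulLeft ζ).trans (Equiv.addRight 1), ζ), fun z w => by simp [mul_sub]⟩]

theorem exponentSum_a : exponentSum a = .ofAdd 1 := lift_apply_of

theorem exponentSum_b : exponentSum b = .ofAdd 1 := lift_apply_of

theorem affineRep_a (ζ : Kˣ) :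
    (affineRep ζ a : Equiv.Perm K × Kˣ) = (Units.mulLeft ζ, ζ) := by
  simp [affineRep, a]

theorem affineRep_b (ζ : Kˣ) :
    (affineRep ζ b : Equiv.Perm K × Kˣ) = ((Units.mulLeft ζ).trans (Equiv.addRight 1), ζ) := by
  simp [affineRep, b]

theorem affineRep_snd (ζ : Kˣ) (t : F2) :
    (affineRep ζ t : Equiv.Perm K × Kˣ).2 = ζ ^ (exponentSum t).toAdd := by
  have : (MonoidHom.snd _ _).comp ((affineGroup K).subtype.comp (affineRep ζ)) =
      (zpowersHom Kˣ ζ).comp exponentSum := by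
    ext i
    fin_cases i <;> simp [affineRep, exponentSum]
  exact DFunLike.congr_fun this t

theorem affineRep_pow_eq_one {ζ : Kˣ} {n : ℕ} (hζn : ζ ^ (2 * n) = 1) (hζ2 : ζ ^ 2 ≠ 1) {w : F2}
    (hw : (exponentSum w).toAdd = 2) : (affineRep ζ (w ^ n) : Equiv.Perm K × Kˣ).1 = 1 := by
  rw [map_pow, SubgroupClass.coe_pow, Prod.pow_fst]
  refine affineGroup.pow_eq_one (affineRep ζ w).prop ?_ ?_ <;>
    rw [affineRep_snd, hw, zpow_two, ← sq]
  exacts [by rwa [← pow_mul], hζ2]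

theorem affineRep_pow_mul_pow_apply_zero_ne_zero {ζ : Kˣ} (hζ : ζ ≠ 1) {n : ℕ} (hζn : ζ ^ n ≠ 1) :
    (affineRep ζ (a ^ n * b ^ n) : Equiv.Perm K × Kˣ).1 0 ≠ 0 := by
  obtain ⟨c, hc⟩ := affineGroup.exists_fixedPt (affineRep ζ b).prop (by rwa [affineRep_b])
  have hc0 : c ≠ 0 := by
    rintro rfl
    simp [affineRep_b] at hc
  have hζn' : (ζ : K) ^ n ≠ 1 := by rwa [← Units.val_pow_eq_pow_val, Ne, Units.val_eq_one]
  have : (affineRep ζ (a ^ n * b ^ n) : Equiv.Perm K × Kˣ).1 0 = ζ ^ n * (c * (1 - ζ ^ n)) := by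
    rw [_root_.map_mul, map_pow, map_pow, Subgroup.coe_mul, SubgroupClass.coe_pow,
      SubgroupClass.coe_pow, Prod.fst_mul, Prod.pow_fst, Prod.pow_fst, Equiv.Perm.mul_apply,
      affineGroup.pow_apply (affineRep ζ b).prop hc,
      affineGroup.pow_apply (affineRep ζ a).prop (c := 0) (by simp [affineRep_a])]
    simp [affineRep_a, affineRep_b]
    ring
  rw [this]
  exact mul_ne_zero (pow_ne_zero _ ζ.ne_zero) (mul_ne_zero hc0 (sub_ne_zero.mpr hζn'.symm))

theorem pow_mul_pow_ne_pow {n : ℕ} (hn : 2 ≤ n) (w : F2) : a ^ n * b ^ n ≠ w ^ n := by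
  intro hw
  obtain ⟨ζ, hζ⟩ : ∃ ζ : ℂˣ, IsPrimitiveRoot ζ (2 * n) :=
    ⟨_, (Complex.isPrimitiveRoot_exp _ (by omega)).isUnit_unit (by omega)⟩
  have hσ : (exponentSum w).toAdd = 2 := by
    have h := congrArg (fun t => (exponentSum t).toAdd) hw
    simp only [_root_.map_mul, map_pow, toAdd_mul, toAdd_pow, exponentSum_a, exponentSum_b,
      toAdd_ofAdd, nsmul_eq_mul, mul_one] at h
    exact mul_left_cancel₀ (by omega : (n : ℤ) ≠ 0) (by rw [← h]; ring)
  have hζn : ζ ^ n ≠ 1 := hζ.pow_ne_one_of_pos_of_lt (by omega) (by omega)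
  have hζ2 : ζ ^ 2 ≠ 1 := hζ.pow_ne_one_of_pos_of_lt two_ne_zero (by omega)
  refine affineRep_pow_mul_pow_apply_zero_ne_zero (hζ.ne_one (by omega)) hζn ?_
  rw [hw, affineRep_pow_eq_one hζ.pow_eq_one hζ2 hσ, Equiv.Perm.one_apply]

end NotPower

theorem not_simpleElem_pow_mul_pow {n : ℕ} (hn : 2 ≤ n) : ¬ SimpleElem (a ^ n * b ^ n) := by
  intro h
  obtain ⟨w, hw⟩ := h.exists_eq_pow (n := n) (.ofFreeGroup (Fin 2)) fun π =>
    ⟨(π a).toAdd + (π b).toAdd, by simp [mul_add]⟩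
  exact pow_mul_pow_ne_pow hn w hw

theorem dSimp_anbn (n : ℕ) (hn : 2 ≤ n) : dSimp (a ^ n * b ^ n) = 2 := by
  obtain ⟨w, hsimple, hw⟩ := exists_simpleElem_schreierHom_eq n
  have hmem : a ^ n * b ^ n ∈ parity.ker := hw ▸ (schreierEquiv w).prop
  have h2 : 2 ∈ {k : ℕ | 0 < k ∧ ∃ H : Subgroup F2, H.index = k ∧
      ∃ hg : a ^ n * b ^ n ∈ H, SimpleElem (⟨a ^ n * b ^ n, hg⟩ : H)} := by
    refine ⟨two_pos, parity.ker, index_ker_parity, hmem, ?_⟩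
    rw [← show schreierEquiv w = ⟨_, hmem⟩ from Subtype.ext hw]
    exact hsimple.map schreierEquiv
  refine le_antisymm (Nat.sInf_le h2) (le_csInf ⟨2, h2⟩ ?_)
  rintro k ⟨hk, H, rfl, hg, hsimple⟩
  by_contra! hlt
  obtain rfl : H = ⊤ := Subgroup.index_eq_one.mp (by omega)
  exact not_simpleElem_pow_mul_pow hn (hsimple.map Subgroup.topEquiv)
end
end
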